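/- Let Rad be a root system in a finite-dimensional real inner product space V, let v be a regular vector, and let f be an orthogonal linear automorphism of V with f(Rad) = Rad. Then there exist a unique element w of the Weyl group W(Rad) and a unique orthogonal automorphism g of V with g(Rad) = Rad and g(R⁺(v)) = R⁺(v), such that f = w ∘ g. (That is, the full automorphism group of Rad is the semidirect product of W(Rad) and the stabilizer of the positive system R⁺(v).) -/

import Mathlib

/-!
Every `g ∈ Aut(Rad)` carries `R⁺(u)` to `R⁺(g u)`. The Weyl group `W` is finite, and an element
`w ∈ W` maximizing `(w u, v)` satisfies `R⁺(w u) = R⁺(v)`: reflecting in a root `α ∈ R⁺(v)` with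
`(α, w u) < 0` would increase `(w u, v)`. Applied to `u = f v` this makes `w₀ f` fix `R⁺(v)` for
some `w₀ ∈ W`, whence the factorization `f = w₀⁻¹ (w₀ f)`.

Uniqueness amounts to: an element of `W` fixing `R⁺(v)` is trivial. The reflection in a simple
root `α` permutes `R⁺(v) \ {α}`; this yields that `W` is generated by simple reflections, and the
deletion argument shortens any product of simple reflections fixing `R⁺(v)` until it is empty.
-/

open scoped RealInnerProductSpace

namespace PaperRS

variable {V : Type*} [NormedAddCommGroup V] [InnerProductSpace ℝ V]

/-- The reflection in a root `α`. -/
noncomputable def reflRoot (α x : V) : V := x - (2 * ⟪x, α⟫ / ⟪α, α⟫) • α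

/-- `Rad` is a (reduced, crystallographic) root system in `V`. -/
structure IsRootSystem (Rad : Set V) : Prop where
  finite : Rad.Finite
  nonzero : ∀ α ∈ Rad, α ≠ 0
  spanning : Submodule.span ℝ Rad = ⊤
  integral : ∀ α ∈ Rad, ∀ β ∈ Rad, ∃ n : ℤ, 2 * ⟪β, α⟫ / ⟪α, α⟫ = (n : ℝ)
  reflMem : ∀ α ∈ Rad, ∀ β ∈ Rad, reflRoot α β ∈ Rad
  reduced : ∀ α ∈ Rad, ∀ c : ℝ, c • α ∈ Rad → c = 1 ∨ c = -1

/-- Irreducibility: `Rad` is not the union of two nonempty mutually orthogonal subsets. -/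
def IsIrreducible (Rad : Set V) : Prop :=
  ¬ ∃ R₁ R₂ : Set V, R₁.Nonempty ∧ R₂.Nonempty ∧ Rad = R₁ ∪ R₂ ∧
      ∀ α ∈ R₁, ∀ β ∈ R₂, ⟪α, β⟫ = 0

/-- An involution of the root system `Rad`: an orthogonal linear automorphism `t` of `V`
with `t(Rad) = Rad` and `t ∘ t = id`. -/
structure IsInvolution (Rad : Set V) (t : V ≃ₗᵢ[ℝ] V) : Prop where
  maps : (⇑t) '' Rad = Rad
  invol : ∀ x : V, t (t x) = x

/-- Two roots are strongly orthogonal if neither their sum nor their difference is a root. -/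
def StronglyOrthogonal (Rad : Set V) (α β : V) : Prop :=
  α ≠ β ∧ α ≠ -β ∧ α + β ∉ Rad ∧ α - β ∉ Rad

/-- A vector is regular for `Rad` if it is orthogonal to no root. -/
def IsRegular (Rad : Set V) (v : V) : Prop := ∀ α ∈ Rad, ⟪α, v⟫ ≠ 0

/-- The positive roots determined by a regular vector `v`. -/
def posRoots (Rad : Set V) (v : V) : Set V := {α ∈ Rad | 0 < ⟪α, v⟫}

/-- The base of simple roots determined by a regular vector `v`: the positive roots which
are not sums of two positive roots. -/
def simpleBase (Rad : Set V) (v : V) : Set V :=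
  {α ∈ posRoots Rad v | ¬ ∃ β ∈ posRoots Rad v, ∃ γ ∈ posRoots Rad v, α = β + γ}

/-- A regular vector `v` is an S-chamber vector for an involution `t` if
`(α,v)·(t α,v) > 0` for every complex root `α` (i.e. every root with `t α ≠ ±α`). -/
def IsSChamber (Rad : Set V) (t : V ≃ₗᵢ[ℝ] V) (v : V) : Prop :=
  IsRegular Rad v ∧
    ∀ α ∈ Rad, t α ≠ α → t α ≠ -α → 0 < ⟪α, v⟫ * ⟪t α, v⟫

/-- `P ⊆ Rad` is parabolic if `P ∪ (-P) = Rad` and `P` is closed under root addition. -/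
def IsParabolic (Rad P : Set V) : Prop :=
  P ⊆ Rad ∧ (∀ α ∈ Rad, α ∈ P ∨ -α ∈ P) ∧
    ∀ α ∈ P, ∀ β ∈ P, α + β ∈ Rad → α + β ∈ P

/-- Composition `s_{β 0} ∘ s_{β 1} ∘ ⋯ ∘ s_{β (r-1)}` of the reflections in the roots
`β 0, …, β (r-1)`. -/
noncomputable def reflComp : (r : ℕ) → (Fin r → V) → V → V
  | 0, _ => id
  | r + 1, β => reflRoot (β 0) ∘ reflComp r (fun i => β i.succ)

open LinearIsometryEquiv

theorem reflRoot_self {α : V} (hα : α ≠ 0) : reflRoot α α = -α := by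
  rw [reflRoot, mul_div_assoc, div_self (inner_self_ne_zero.2 hα), mul_one, two_smul]
  abel

theorem reflRoot_neg (α x : V) : reflRoot (-α) x = reflRoot α x := by
  simp only [reflRoot, inner_neg_right, inner_neg_left, neg_neg, mul_neg, neg_div, neg_smul,
    smul_neg]

theorem reflRoot_map (g : V ≃ₗᵢ[ℝ] V) (α x : V) : reflRoot (g α) (g x) = g (reflRoot α x) := by
  simp only [reflRoot, inner_map_map, _root_.map_sub, _root_.map_smul]

theorem inner_reflRoot_left (α x y : V) :
    ⟪reflRoot α x, y⟫ = ⟪x, y⟫ - 2 * ⟪x, α⟫ / ⟪α, α⟫ * ⟪α, y⟫ := by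
  rw [reflRoot, inner_sub_left, real_inner_smul_left]

noncomputable def rootReflection (α : V) : V ≃ₗᵢ[ℝ] V := (ℝ ∙ α)ᗮ.reflection

-- No hypothesis `α ≠ 0` is needed: for `α = 0` both sides are the identity, as `x / 0 = 0`.
@[simp]
theorem rootReflection_apply (α x : V) : rootReflection α x = reflRoot α x := by
  rw [rootReflection, Submodule.reflection_orthogonal_apply, Submodule.reflection_singleton_apply,
    RCLike.ofReal_real_eq_id, id, reflRoot, ← real_inner_self_eq_norm_sq, real_inner_comm α x]
  module

theorem rootReflection_rootReflection (α x : V) : rootReflection α (rootReflection α x) = x :=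
  Submodule.reflection_reflection _ x

theorem rootReflection_mul_self (α : V) : rootReflection α * rootReflection α = 1 :=
  Submodule.reflection_mul_reflection _

theorem rootReflection_neg (α : V) : rootReflection (-α) = rootReflection α := by
  ext x
  simp [reflRoot_neg]

theorem rootReflection_map (g : V ≃ₗᵢ[ℝ] V) (α : V) :
    rootReflection (g α) = g * rootReflection α * g⁻¹ := by
  ext x
  simpa using reflRoot_map g α (g.symm x)

def setStabilizer (S : Set V) : Subgroup (V ≃ₗᵢ[ℝ] V) where
  carrier := {g | ⇑g '' S = S}
  one_mem' := Set.image_id S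
  mul_mem' {a b} (ha : ⇑a '' S = S) (hb : ⇑b '' S = S) := by
    change ⇑(a * b) '' S = S
    rw [coe_mul, Set.image_comp, hb, ha]
  inv_mem' {a} (ha : ⇑a '' S = S) := by
    change ⇑a⁻¹ '' S = S
    conv_lhs => rw [← ha, ← Set.image_comp]
    simp

theorem mem_setStabilizer {S : Set V} {g : V ≃ₗᵢ[ℝ] V} : g ∈ setStabilizer S ↔ ⇑g '' S = S :=
  Iff.rfl

theorem apply_mem_of_mem_setStabilizer {S : Set V} {g : V ≃ₗᵢ[ℝ] V} (hg : g ∈ setStabilizer S)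
    {x : V} (hx : x ∈ S) : g x ∈ S :=
  hg ▸ Set.mem_image_of_mem g hx

def weylGroup (Rad : Set V) : Subgroup (V ≃ₗᵢ[ℝ] V) := Subgroup.closure (rootReflection '' Rad)

theorem closure_setOf_reflRoot (Rad : Set V) :
    Subgroup.closure {u : V ≃ₗᵢ[ℝ] V | ∃ α ∈ Rad, ∀ x : V, u x = reflRoot α x} = weylGroup Rad := by
  congr 1
  ext u
  simp only [Set.mem_ofPred_eq, Set.mem_image, LinearIsometryEquiv.ext_iff, rootReflection_apply,
    eq_comm (a := u _)]

theorem rootReflection_mem_weylGroup {Rad : Set V} {α : V} (hα : α ∈ Rad) :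
    rootReflection α ∈ weylGroup Rad :=
  Subgroup.subset_closure ⟨α, hα, rfl⟩

def simpleReflections (Rad : Set V) (v : V) : Set (V ≃ₗᵢ[ℝ] V) :=
  rootReflection '' simpleBase Rad v

namespace IsRootSystem

variable {Rad : Set V} (hRS : IsRootSystem Rad)
include hRS

theorem neg_mem {α : V} (hα : α ∈ Rad) : -α ∈ Rad :=
  reflRoot_self (hRS.nonzero α hα) ▸ hRS.reflMem α hα α hα

theorem inner_self_pos {α : V} (hα : α ∈ Rad) : 0 < ⟪α, α⟫ :=
  real_inner_self_pos.2 (hRS.nonzero α hα)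

theorem rootReflection_mem_setStabilizer {α : V} (hα : α ∈ Rad) :
    rootReflection α ∈ setStabilizer Rad := by
  refine (Set.image_subset_iff.2 fun β hβ => ?_).antisymm fun β hβ => ?_
  · simpa using hRS.reflMem α hα β hβ
  · exact ⟨rootReflection α β, by simpa using hRS.reflMem α hα β hβ,
      rootReflection_rootReflection α β⟩

theorem weylGroup_le_setStabilizer : weylGroup Rad ≤ setStabilizer Rad :=
  Subgroup.closure_le _ |>.2 <| Set.image_subset_iff.2 fun _ hα =>
    hRS.rootReflection_mem_setStabilizer hα

/-- A linear isometry preserving the spanning set `Rad` is determined by the permutation of `Rad`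
it induces. -/
theorem finite_setStabilizer : (setStabilizer Rad : Set (V ≃ₗᵢ[ℝ] V)).Finite := by
  have : Finite Rad := hRS.finite.to_subtype
  let restrict : setStabilizer Rad → (Rad → Rad) := fun g α =>
    ⟨(g : V ≃ₗᵢ[ℝ] V) α, apply_mem_of_mem_setStabilizer g.2 α.2⟩
  refine Set.finite_coe_iff.1 <| Finite.of_injective restrict fun g h hgh => Subtype.ext ?_
  refine toLinearEquiv_injective <| LinearEquiv.toLinearMap_injective <|
    LinearMap.ext_on hRS.spanning fun α hα => ?_
  exact congrArg Subtype.val (congrFun hgh ⟨α, hα⟩)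

theorem inner_sq_lt {α β : V} (hα : α ∈ Rad) (hβ : β ∈ Rad) (h₁ : β ≠ α) (h₂ : β ≠ -α) :
    ⟪α, β⟫ ^ 2 < ⟪α, α⟫ * ⟪β, β⟫ := by
  refine (sq ⟪α, β⟫ ▸ real_inner_mul_inner_self_le α β).lt_of_ne fun heq => ?_
  have hnorm : ‖⟪α, β⟫‖ = ‖α‖ * ‖β‖ := by
    rw [Real.norm_eq_abs, ← sq_eq_sq₀ (abs_nonneg _) (by positivity), sq_abs, heq, mul_pow,
      real_inner_self_eq_norm_sq, real_inner_self_eq_norm_sq]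
  obtain ⟨r, -, rfl⟩ := (norm_inner_eq_norm_iff (hRS.nonzero α hα) (hRS.nonzero β hβ)).1 hnorm
  rcases hRS.reduced α hα r hβ with rfl | rfl <;> simp_all

theorem sub_mem_of_inner_pos {α β : V} (hα : α ∈ Rad) (hβ : β ∈ Rad) (hne : α ≠ β)
    (hpos : 0 < ⟪α, β⟫) : α - β ∈ Rad := by
  obtain ⟨m, hm⟩ := hRS.integral β hβ α hα
  obtain ⟨n, hn⟩ := hRS.integral α hα β hβ
  have hαα := hRS.inner_self_pos hα
  have hββ := hRS.inner_self_pos hβ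
  rw [real_inner_comm] at hn
  have hm0 : (0 : ℝ) < m := hm ▸ by positivity
  have hn0 : (0 : ℝ) < n := hn ▸ by positivity
  -- `m n = 4 cos² ∠(α, β) < 4` by the strict Cauchy–Schwarz inequality
  have hmn : (m : ℝ) * n < 4 := by
    have hCS := hRS.inner_sq_lt hα hβ hne.symm fun h => by
      rw [h, inner_neg_right, real_inner_self_eq_norm_sq] at hpos
      nlinarith [sq_nonneg ‖α‖]
    rw [← hm, ← hn, div_mul_div_comm, div_lt_iff₀ (by positivity)]
    nlinarith
  have : m = 1 ∨ n = 1 := by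
    have hm0 : 0 < m := by exact_mod_cast hm0
    have hn0 : 0 < n := by exact_mod_cast hn0
    have hmn : m * n < 4 := by exact_mod_cast hmn
    by_contra! h
    nlinarith [show 2 ≤ m by omega, show 2 ≤ n by omega]
  rcases this with h | h
  · have := hRS.reflMem β hβ α hα
    rwa [reflRoot, hm, h, Int.cast_one, one_smul] at this
  · have := hRS.neg_mem (hRS.reflMem α hα β hβ)
    rwa [reflRoot, real_inner_comm α β, hn, h, Int.cast_one, one_smul, neg_sub] at this

end IsRootSystem

section PositiveRoots

variable {Rad : Set V} {v : V}

theorem IsRegular.map {g : V ≃ₗᵢ[ℝ] V} (hg : g ∈ setStabilizer Rad) (hv : IsRegular Rad v) :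
    IsRegular Rad (g v) := fun α hα => by
  rw [← inner_map_map g⁻¹]
  simpa using hv _ (apply_mem_of_mem_setStabilizer (inv_mem hg) hα)

theorem image_posRoots {g : V ≃ₗᵢ[ℝ] V} (hg : g ∈ setStabilizer Rad) (u : V) :
    ⇑g '' posRoots Rad u = posRoots Rad (g u) := by
  ext β
  constructor
  · rintro ⟨α, ⟨hα, hpos⟩, rfl⟩
    exact ⟨apply_mem_of_mem_setStabilizer hg hα, by rwa [inner_map_map]⟩
  · rintro ⟨hβ, hpos⟩
    refine ⟨g⁻¹ β, ⟨apply_mem_of_mem_setStabilizer (inv_mem hg) hβ, ?_⟩, by simp⟩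
    rwa [← inner_map_map g, show g (g⁻¹ β) = β from g.apply_symm_apply β]

theorem mem_posRoots_or_neg_mem (hRS : IsRootSystem Rad) (hv : IsRegular Rad v) {α : V}
    (hα : α ∈ Rad) : α ∈ posRoots Rad v ∨ -α ∈ posRoots Rad v := by
  rcases (hv α hα).lt_or_gt with h | h
  · exact .inr ⟨hRS.neg_mem hα, by rw [inner_neg_left]; linarith⟩
  · exact .inl ⟨hα, h⟩

theorem posRoots_eq_of_subset (hRS : IsRootSystem Rad) (hv : IsRegular Rad v) {u : V}
    (h : posRoots Rad v ⊆ posRoots Rad u) : posRoots Rad u = posRoots Rad v := by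
  refine Set.Subset.antisymm (fun α hα => ?_) h
  refine (mem_posRoots_or_neg_mem hRS hv hα.1).resolve_right fun hneg => ?_
  have := (h hneg).2
  rw [inner_neg_left] at this
  linarith [hα.2]

theorem IsRootSystem.exists_mem_weylGroup_posRoots_eq (hRS : IsRootSystem Rad)
    (hv : IsRegular Rad v) {u : V} (hu : IsRegular Rad u) :
    ∃ w ∈ weylGroup Rad, posRoots Rad (w u) = posRoots Rad v := by
  obtain ⟨w, hw, hmax⟩ := Set.exists_max_image (weylGroup Rad : Set (V ≃ₗᵢ[ℝ] V))
    (fun w => ⟪w u, v⟫) (hRS.finite_setStabilizer.subset hRS.weylGroup_le_setStabilizer)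
    ⟨1, one_mem _⟩
  refine ⟨w, hw, posRoots_eq_of_subset hRS hv fun α ⟨hα, hαv⟩ => ⟨hα, ?_⟩⟩
  refine ((hu.map (hRS.weylGroup_le_setStabilizer hw)) α hα).lt_or_gt.resolve_left fun hneg => ?_
  have hle := hmax _ (mul_mem (rootReflection_mem_weylGroup hα) hw)
  have hc : 2 * ⟪w u, α⟫ / ⟪α, α⟫ < 0 :=
    div_neg_of_neg_of_pos (by rw [real_inner_comm]; linarith) (hRS.inner_self_pos hα)
  simp only [coe_mul, Function.comp_apply, rootReflection_apply, inner_reflRoot_left] at hle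
  nlinarith

theorem wellFoundedOn_posRoots (hfin : Rad.Finite) (v : V) :
    (posRoots Rad v).WellFoundedOn fun β γ => ⟪β, v⟫ < ⟪γ, v⟫ :=
  Set.wellFoundedOn_image.1 ((hfin.subset fun _ hβ => hβ.1).image _).wellFoundedOn

theorem mem_closure_simpleBase (hfin : Rad.Finite) {β : V} (hβ : β ∈ posRoots Rad v) :
    β ∈ AddSubmonoid.closure (simpleBase Rad v) := by
  refine (wellFoundedOn_posRoots hfin v).induction hβ fun β hβ ih => ?_
  by_cases hs : β ∈ simpleBase Rad v
  · exact AddSubmonoid.subset_closure hs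
  obtain ⟨p, hp, q, hq, rfl⟩ : ∃ p ∈ posRoots Rad v, ∃ q ∈ posRoots Rad v, β = p + q :=
    not_not.1 fun h => hs ⟨hβ, h⟩
  have hpq : ⟪p + q, v⟫ = ⟪p, v⟫ + ⟪q, v⟫ := inner_add_left p q v
  exact add_mem (ih p hp (by rw [hpq]; linarith [hq.2]))
    (ih q hq (by rw [hpq]; linarith [hp.2]))

namespace IsRootSystem

variable (hRS : IsRootSystem Rad)
include hRS

theorem exists_mem_simpleBase_inner_pos {β : V} (hβ : β ∈ posRoots Rad v) :
    ∃ α ∈ simpleBase Rad v, 0 < ⟪β, α⟫ := by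
  by_contra! h
  have hcone : ∀ x ∈ AddSubmonoid.closure (simpleBase Rad v), ⟪β, x⟫ ≤ 0 := fun x hx => by
    induction hx using AddSubmonoid.closure_induction with
    | mem y hy => exact h y hy
    | zero => simp
    | add y z _ _ hy hz => rw [inner_add_right]; linarith
  exact (hcone β (mem_closure_simpleBase hRS.finite hβ)).not_gt (hRS.inner_self_pos hβ.1)

theorem simpleReflections_subset_setStabilizer :
    simpleReflections Rad v ⊆ setStabilizer Rad := by
  rintro _ ⟨α, hα, rfl⟩
  exact hRS.rootReflection_mem_setStabilizer hα.1.1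

variable (hv : IsRegular Rad v)
include hv

theorem sub_mem_posRoots {α β : V} (hα : α ∈ simpleBase Rad v) (hβ : β ∈ posRoots Rad v)
    (hne : β ≠ α) (hpos : 0 < ⟪β, α⟫) : β - α ∈ posRoots Rad v :=
  (mem_posRoots_or_neg_mem hRS hv (hRS.sub_mem_of_inner_pos hβ.1 hα.1.1 hne hpos)).resolve_right
    fun hneg => hα.2 ⟨β, hβ, -(β - α), hneg, by abel⟩

theorem reflRoot_mem_posRoots {α β : V} (hα : α ∈ simpleBase Rad v) (hβ : β ∈ posRoots Rad v)
    (hne : β ≠ α) : reflRoot α β ∈ posRoots Rad v := by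
  refine (wellFoundedOn_posRoots hRS.finite v).induction hβ
    (P := fun β => β ≠ α → reflRoot α β ∈ posRoots Rad v) (fun β hβ ih hne => ?_) hne
  have hαR := hα.1.1
  refine (mem_posRoots_or_neg_mem hRS hv (hRS.reflMem α hαR β hβ.1)).resolve_right fun hneg => ?_
  have hpos : 0 < ⟪β, α⟫ := by
    have := hneg.2
    rw [inner_neg_left, inner_reflRoot_left] at this
    by_contra! h
    have : 2 * ⟪β, α⟫ / ⟪α, α⟫ ≤ 0 :=
      div_nonpos_of_nonpos_of_nonneg (by linarith) (hRS.inner_self_pos hαR).le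
    nlinarith [hβ.2, hα.1.2]
  have hδ := hRS.sub_mem_posRoots hv hα hβ hne hpos
  have hδα : β - α ≠ α := fun h => by
    have := hRS.reduced α hαR 2 (by convert hβ.1 using 1; linear_combination (norm := module) -h)
    norm_num at this
  -- by minimality, `s_α (β - α) = s_α β + α` is positive, so `α = (s_α β + α) + (-s_α β)`
  have := ih _ hδ (by rw [inner_sub_left]; linarith [hα.1.2]) hδα
  rw [← rootReflection_apply, _root_.map_sub, rootReflection_apply, rootReflection_apply,
    reflRoot_self (hRS.nonzero α hαR), sub_neg_eq_add] at this
  exact hα.2 ⟨_, this, _, hneg, by abel⟩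

theorem rootReflection_mem_closure_simpleReflections {β : V} (hβ : β ∈ Rad) :
    rootReflection β ∈ Subgroup.closure (simpleReflections Rad v) := by
  suffices h : ∀ β ∈ posRoots Rad v, rootReflection β ∈ Subgroup.closure (simpleReflections Rad v) by
    rcases mem_posRoots_or_neg_mem hRS hv hβ with hpos | hneg
    · exact h β hpos
    · simpa [rootReflection_neg] using h _ hneg
  refine fun β hβ => (wellFoundedOn_posRoots hRS.finite v).induction hβ
    (P := fun β => rootReflection β ∈ Subgroup.closure (simpleReflections Rad v)) fun β hβ ih => ?_
  obtain ⟨α, hα, hpos⟩ := hRS.exists_mem_simpleBase_inner_pos hβ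
  have hsα : rootReflection α ∈ Subgroup.closure (simpleReflections Rad v) :=
    Subgroup.subset_closure ⟨α, hα, rfl⟩
  obtain rfl | hne := eq_or_ne β α
  · exact hsα
  have hγ : rootReflection α β ∈ posRoots Rad v := by
    simpa using hRS.reflRoot_mem_posRoots hv hα hβ hne
  have hlt : ⟪rootReflection α β, v⟫ < ⟪β, v⟫ := by
    have := div_pos (mul_pos two_pos hpos) (hRS.inner_self_pos hα.1.1)
    rw [rootReflection_apply, inner_reflRoot_left]
    nlinarith [hα.1.2]
  have hconj : rootReflection β =
      rootReflection α * rootReflection (rootReflection α β) * (rootReflection α)⁻¹ := by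
    rw [← rootReflection_map, rootReflection_rootReflection]
  exact hconj ▸ mul_mem (mul_mem hsα (ih _ hγ hlt)) (inv_mem hsα)

theorem weylGroup_le_closure_simpleReflections :
    weylGroup Rad ≤ Subgroup.closure (simpleReflections Rad v) :=
  Subgroup.closure_le _ |>.2 <| Set.image_subset_iff.2 fun _ hβ =>
    hRS.rootReflection_mem_closure_simpleReflections hv hβ

theorem exists_prod_eq_mul_rootReflection {α : V} (hα : α ∈ simpleBase Rad v)
    {l : List (V ≃ₗᵢ[ℝ] V)} (hl : ∀ s ∈ l, s ∈ simpleReflections Rad v)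
    (hneg : ⟪l.prod α, v⟫ < 0) :
    ∃ l' : List (V ≃ₗᵢ[ℝ] V), (∀ s ∈ l', s ∈ simpleReflections Rad v) ∧
      l'.length + 1 = l.length ∧ l.prod = l'.prod * rootReflection α := by
  induction l with
  | nil => exact absurd hα.1.2 (by simpa using hneg.le)
  | cons s l ih =>
    obtain ⟨a, ha, rfl⟩ := hl s List.mem_cons_self
    have hl' : ∀ s ∈ l, s ∈ simpleReflections Rad v := fun s hs => hl s (List.mem_cons_of_mem _ hs)
    have hβ : l.prod α ∈ Rad := apply_mem_of_mem_setStabilizer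
      (Subgroup.list_prod_mem _ fun s hs => hRS.simpleReflections_subset_setStabilizer (hl' s hs))
      hα.1.1
    rw [List.prod_cons, coe_mul, Function.comp_apply, rootReflection_apply] at hneg
    rcases (hv _ hβ).lt_or_gt with hβneg | hβpos
    · obtain ⟨l', hl'', hlen, heq⟩ := ih hl' hβneg
      refine ⟨rootReflection a :: l', ?_, by simp [hlen], by simp [heq, mul_assoc]⟩
      exact List.forall_mem_cons.2 ⟨⟨a, ha, rfl⟩, hl''⟩
    · -- `s_a` sends the positive root `l.prod α` to a negative one, so `l.prod α = a`
      have hβa : l.prod α = a := by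
        by_contra hne
        linarith [(hRS.reflRoot_mem_posRoots hv ha ⟨hβ, hβpos⟩ hne).2]
      refine ⟨l, hl', rfl, ?_⟩
      rw [List.prod_cons, ← hβa, rootReflection_map, inv_mul_cancel_right]

theorem prod_eq_one_of_image_posRoots {l : List (V ≃ₗᵢ[ℝ] V)}
    (hl : ∀ s ∈ l, s ∈ simpleReflections Rad v)
    (hfix : ⇑l.prod '' posRoots Rad v = posRoots Rad v) : l.prod = 1 := by
  induction hn : l.length using Nat.strong_induction_on generalizing l with
  | _ n ih =>
  obtain rfl | ⟨l, s, rfl⟩ := l.eq_nil_or_concat'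
  · rfl
  obtain ⟨b, hb, rfl⟩ := hl s (by simp)
  have hl' : ∀ s ∈ l, s ∈ simpleReflections Rad v := fun s hs => hl s (by simp [hs])
  have hprod : (l ++ [rootReflection b]).prod = l.prod * rootReflection b := by simp
  have hneg : ⟪l.prod b, v⟫ < 0 := by
    have := (hfix ▸ Set.mem_image_of_mem _ hb.1 : _ ∈ posRoots Rad v).2
    rw [hprod, coe_mul, Function.comp_apply, rootReflection_apply,
      reflRoot_self (hRS.nonzero b hb.1.1), map_neg, inner_neg_left] at this
    linarith
  obtain ⟨l', hl'', hlen, heq⟩ := hRS.exists_prod_eq_mul_rootReflection hv hb hl' hneg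
  have hshort : (l ++ [rootReflection b]).prod = l'.prod := by
    rw [hprod, heq, mul_assoc, rootReflection_mul_self, mul_one]
  rw [hshort] at hfix ⊢
  exact ih l'.length (by simp at hn; omega) hl'' hfix rfl

theorem eq_one_of_mem_weylGroup {w : V ≃ₗᵢ[ℝ] V} (hw : w ∈ weylGroup Rad)
    (hfix : ⇑w '' posRoots Rad v = posRoots Rad v) : w = 1 := by
  have hfin : ∀ s ∈ simpleReflections Rad v, IsOfFinOrder s := by
    rintro _ ⟨a, -, rfl⟩
    exact isOfFinOrder_iff_pow_eq_one.2 ⟨2, two_pos, by rw [sq, rootReflection_mul_self]⟩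
  have hmem : w ∈ Submonoid.closure (simpleReflections Rad v) := by
    rw [← Subgroup.closure_toSubmonoid_of_isOfFinOrder hfin]
    exact hRS.weylGroup_le_closure_simpleReflections hv hw
  obtain ⟨l, hl, rfl⟩ := Submonoid.exists_list_of_mem_closure hmem
  exact hRS.prod_eq_one_of_image_posRoots hv hl hfix

end IsRootSystem

end PositiveRoots

theorem stmt17_general {V : Type*} [NormedAddCommGroup V] [InnerProductSpace ℝ V]
    (Rad : Set V) (hRS : IsRootSystem Rad)
    (v : V) (hreg : IsRegular Rad v)
    (f : V ≃ₗᵢ[ℝ] V) (hf : (⇑f) '' Rad = Rad) :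
    ∃ w g : V ≃ₗᵢ[ℝ] V,
      w ∈ Subgroup.closure {u : V ≃ₗᵢ[ℝ] V | ∃ α ∈ Rad, ∀ x : V, u x = reflRoot α x} ∧
      (⇑g) '' Rad = Rad ∧ (⇑g) '' posRoots Rad v = posRoots Rad v ∧
      (∀ x : V, f x = w (g x)) ∧
      (∀ w' g' : V ≃ₗᵢ[ℝ] V,
        w' ∈ Subgroup.closure {u : V ≃ₗᵢ[ℝ] V | ∃ α ∈ Rad, ∀ x : V, u x = reflRoot α x} →
        (⇑g') '' Rad = Rad → (⇑g') '' posRoots Rad v = posRoots Rad v →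
        (∀ x : V, f x = w' (g' x)) → w' = w ∧ g' = g) := by
  simp only [closure_setOf_reflRoot, ← mem_setStabilizer]
  obtain ⟨w, hw, hpos⟩ := hRS.exists_mem_weylGroup_posRoots_eq hreg (hreg.map hf)
  have hwf : w * f ∈ setStabilizer Rad := mul_mem (hRS.weylGroup_le_setStabilizer hw) hf
  have hwf' : w * f ∈ setStabilizer (posRoots Rad v) := by
    rw [mem_setStabilizer, image_posRoots hwf, ← hpos]
    rfl
  refine ⟨w⁻¹, w * f, inv_mem hw, hwf, hwf', fun x => by simp, fun w' g' hw' _ hg' hfac => ?_⟩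
  obtain rfl : f = w' * g' := LinearIsometryEquiv.ext hfac
  have hone : w * w' = 1 := by
    refine hRS.eq_one_of_mem_weylGroup hreg (mul_mem hw hw') ?_
    rw [← mem_setStabilizer, show w * w' = w * (w' * g') * g'⁻¹ by group]
    exact mul_mem hwf' (inv_mem hg')
  rw [eq_inv_of_mul_eq_one_right hone]
  exact ⟨rfl, by group⟩

/-- the full automorphism group of a root system is the semidirect product
of the Weyl group with the stabilizer of a positive system: every automorphism `f`
factors uniquely as `f = w ∘ g` with `w` in the Weyl group and `g` an automorphism
preserving `R⁺(v)`. -/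
theorem stmt17 {V : Type*} [NormedAddCommGroup V] [InnerProductSpace ℝ V]
    [FiniteDimensional ℝ V] (Rad : Set V) (hRS : IsRootSystem Rad)
    (v : V) (hreg : IsRegular Rad v)
    (f : V ≃ₗᵢ[ℝ] V) (hf : (⇑f) '' Rad = Rad) :
    ∃ w g : V ≃ₗᵢ[ℝ] V,
      w ∈ Subgroup.closure {u : V ≃ₗᵢ[ℝ] V | ∃ α ∈ Rad, ∀ x : V, u x = reflRoot α x} ∧
      (⇑g) '' Rad = Rad ∧ (⇑g) '' posRoots Rad v = posRoots Rad v ∧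
      (∀ x : V, f x = w (g x)) ∧
      (∀ w' g' : V ≃ₗᵢ[ℝ] V,
        w' ∈ Subgroup.closure {u : V ≃ₗᵢ[ℝ] V | ∃ α ∈ Rad, ∀ x : V, u x = reflRoot α x} →
        (⇑g') '' Rad = Rad → (⇑g') '' posRoots Rad v = posRoots Rad v →
        (∀ x : V, f x = w' (g' x)) → w' = w ∧ g' = g) :=
  stmt17_general Rad hRS v hreg f hf

end PaperRS
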